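/- If the bipartite graph H_0 = (L_0, R_0, E_0) has a perfect matching, then the Ollivier–Ricci curvature of the edge {u,v} in the gadget graph G equals Ric_G({u,v}) = 1/(n+3); equivalently, EMD_G(u,v) = (n+2)/(n+3). -/

import Mathlib

open Finset
open scoped Classical

variable {V : Type*}

/-- The open neighborhood of `u` in `G`, as a finset. -/
noncomputable def nbrF [Fintype V] (G : SimpleGraph V) (u : V) : Finset V :=
  Finset.univ.filter fun x => G.Adj u x

/-- The degree of `u` in `G`. -/
noncomputable def degG [Fintype V] (G : SimpleGraph V) (u : V) : ℕ := (nbrF G u).card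

/-- The closed neighborhood `N[u]` of `u` in `G`. -/
noncomputable def cnbr [Fintype V] (G : SimpleGraph V) (u : V) : Finset V :=
  insert u (nbrF G u)

/-- A transport plan for `(G,u,v)`: nonnegative, with row sums `1/(deg u + 1)` over
`N[u]` and column sums `1/(deg v + 1)` over `N[v]`. -/
def IsPlanG [Fintype V] (G : SimpleGraph V) (u v : V) (z : V → V → ℝ) : Prop :=
  (∀ x y, 0 ≤ z x y) ∧
  (∀ x ∈ cnbr G u, ∑ y ∈ cnbr G v, z x y = 1 / ((degG G u : ℝ) + 1)) ∧
  (∀ y ∈ cnbr G v, ∑ x ∈ cnbr G u, z x y = 1 / ((degG G v : ℝ) + 1))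

/-- The cost of a transport plan, with respect to shortest-path distance in `G`. -/
noncomputable def planCostG [Fintype V] (G : SimpleGraph V) (u v : V) (z : V → V → ℝ) : ℝ :=
  ∑ x ∈ cnbr G u, ∑ y ∈ cnbr G v, (G.dist x y : ℝ) * z x y

/-- The earth mover's distance `EMD_G(u,v)`: the minimum cost of a transport plan. -/
noncomputable def EMDG [Fintype V] (G : SimpleGraph V) (u v : V) : ℝ :=
  sInf {t | ∃ z, IsPlanG G u v z ∧ planCostG G u v z = t}

/-- The Ollivier–Ricci curvature of the edge `{u,v}`. -/
noncomputable def RicG [Fintype V] (G : SimpleGraph V) (u v : V) : ℝ :=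
  1 - EMDG G u v

/-- The five extra vertices `u, v, p, p', x` of the gadget graph. -/
inductive Extra where
  | u | v | p | p' | x
deriving DecidableEq

instance : Fintype Extra where
  elems := {Extra.u, Extra.v, Extra.p, Extra.p', Extra.x}
  complete := by intro x; cases x <;> simp

/-- The vertex set of the gadget graph: `L ⊔ R ⊔ {u,v,p,p',x}`. -/
abbrev GV (L R : Type*) := (L ⊕ R) ⊕ Extra

/-- The base edge relation of the gadget graph built from the bipartite graph
`H₀ = (L, R, E₀)`: the edge `{u,v}`; `{u,a}` for `a ∈ L`; `{v,b}` for `b ∈ R`;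
`{u,p}`; `{v,p'}`; `{p,x}`; `{p',x}`; and `{a,b}` whenever `E₀ a b`. -/
def gadgetRel {L R : Type*} (E0 : L → R → Prop) : GV L R → GV L R → Prop
  | Sum.inr .u, Sum.inr .v => True
  | Sum.inr .u, Sum.inl (Sum.inl _) => True
  | Sum.inr .v, Sum.inl (Sum.inr _) => True
  | Sum.inr .u, Sum.inr .p => True
  | Sum.inr .v, Sum.inr .p' => True
  | Sum.inr .p, Sum.inr .x => True
  | Sum.inr .p', Sum.inr .x => True
  | Sum.inl (Sum.inl a), Sum.inl (Sum.inr b) => E0 a b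
  | _, _ => False

/-- The gadget graph. -/
def gadget {L R : Type*} (E0 : L → R → Prop) : SimpleGraph (GV L R) :=
  SimpleGraph.fromRel (gadgetRel E0)

/-!
The perfect matching `f` gives a transport plan moving `u ↦ u`, `v ↦ v`, `p ↦ p'` (distance 2)
and `a ↦ f a` (distance 1), of cost `(n + 2)/(n + 3)`. Conversely, the potential `φ` equal to `2`
at `p`, to `1` at `u`, `x` and on `L`, and to `0` elsewhere changes by at most `1` along every
edge, so `φ a - φ b ≤ d(a, b)`. Integrating this against any plan bounds its cost below by the
difference of the means of `φ` over `N[u]` and `N[v]`, which is `((n + 3) - 1)/(n + 3)`.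
-/

namespace SimpleGraph

variable {G : SimpleGraph V}

lemma Reachable.le_add_dist_of_forall_adj {f : V → ℝ} (hf : ∀ x y, G.Adj x y → f x ≤ f y + 1)
    {x y : V} (h : G.Reachable x y) : f x ≤ f y + G.dist x y := by
  obtain ⟨w, hw⟩ := h.exists_walk_length_eq_dist
  rw [← hw]
  clear hw h
  induction w with
  | nil => simp
  | cons hadj _ ih => push_cast [Walk.length_cons]; linarith [hf _ _ hadj]

end SimpleGraph

section Transport

variable [Fintype V] {G : SimpleGraph V} {u v : V}

lemma sum_cnbr {M : Type*} [AddCommMonoid M] (F : V → M) :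
    ∑ w ∈ cnbr G u, F w = F u + ∑ w ∈ nbrF G u, F w :=
  sum_insert (by simp [nbrF])

lemma card_cnbr : (cnbr G u).card = degG G u + 1 :=
  card_insert_of_notMem (by simp [nbrF])

lemma mem_cnbr {x : V} : x ∈ cnbr G u ↔ x = u ∨ G.Adj u x := by
  simp [cnbr, nbrF]

theorem le_planCostG_of_potential {z : V → V → ℝ} (hz : IsPlanG G u v z) {φ : V → ℝ}
    (hφ : ∀ x ∈ cnbr G u, ∀ y ∈ cnbr G v, φ x ≤ φ y + G.dist x y) :
    (∑ x ∈ cnbr G u, φ x) / (degG G u + 1) - (∑ y ∈ cnbr G v, φ y) / (degG G v + 1) ≤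
      planCostG G u v z := by
  obtain ⟨hz0, hrow, hcol⟩ := hz
  have hsrc : ∑ x ∈ cnbr G u, ∑ y ∈ cnbr G v, φ x * z x y =
      (∑ x ∈ cnbr G u, φ x) / (degG G u + 1) := by
    simp_rw [← mul_sum, sum_div]
    exact sum_congr rfl fun x hx => by rw [hrow x hx, mul_one_div]
  have htgt : ∑ x ∈ cnbr G u, ∑ y ∈ cnbr G v, φ y * z x y =
      (∑ y ∈ cnbr G v, φ y) / (degG G v + 1) := by
    rw [sum_comm]
    simp_rw [← mul_sum, sum_div]
    exact sum_congr rfl fun y hy => by rw [hcol y hy, mul_one_div]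
  calc _ = ∑ x ∈ cnbr G u, ∑ y ∈ cnbr G v, (φ x - φ y) * z x y := by
        simp_rw [sub_mul, sum_sub_distrib, hsrc, htgt]
    _ ≤ planCostG G u v z :=
        sum_le_sum fun x hx => sum_le_sum fun y hy =>
          mul_le_mul_of_nonneg_right (by linarith [hφ x hx y hy]) (hz0 x y)

noncomputable def planOfEquiv (G : SimpleGraph V) (u : V) (σ : V ≃ V) : V → V → ℝ :=
  fun x y => if σ x = y then 1 / ((degG G u : ℝ) + 1) else 0

variable {σ : V ≃ V}

theorem isPlanG_planOfEquiv (hσ : ∀ x, σ x ∈ cnbr G v ↔ x ∈ cnbr G u) :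
    IsPlanG G u v (planOfEquiv G u σ) := by
  have hdeg : degG G v = degG G u := by
    have := card_nbij' σ σ.symm (s := cnbr G u) (t := cnbr G v) (fun x hx => (hσ x).2 hx)
      (fun y hy => (hσ _).1 (by simpa using hy)) (fun x _ => by simp) (fun y _ => by simp)
    rw [card_cnbr, card_cnbr] at this
    omega
  refine ⟨fun x y => by unfold planOfEquiv; split_ifs <;> positivity, fun x hx => ?_, fun y hy => ?_⟩
  · simp [planOfEquiv, (hσ x).2 hx]
  · simp_rw [planOfEquiv, ← Equiv.eq_symm_apply, hdeg]
    simp [← hσ, hy]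

theorem planCostG_planOfEquiv (hσ : ∀ x, σ x ∈ cnbr G v ↔ x ∈ cnbr G u) :
    planCostG G u v (planOfEquiv G u σ) =
      (∑ x ∈ cnbr G u, (G.dist x (σ x) : ℝ)) / (degG G u + 1) := by
  rw [planCostG, sum_div]
  refine sum_congr rfl fun x hx => ?_
  simp [planOfEquiv, (hσ x).2 hx, div_eq_mul_inv]

end Transport

lemma Extra.univ_eq : (univ : Finset Extra) = {.u, .v, .p, .p', .x} := rfl

namespace Gadget

open SimpleGraph

variable {L R : Type*} {E0 : L → R → Prop}

lemma reachable_u (w : GV L R) : (gadget E0).Reachable (Sum.inr .u) w := by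
  have hv : (gadget E0).Adj (Sum.inr .u) (Sum.inr .v) := by simp [gadget, gadgetRel]
  have hp : (gadget E0).Adj (Sum.inr .u) (Sum.inr .p) := by simp [gadget, gadgetRel]
  rcases w with (a | b) | _ | _ | _ | _ | _
  · exact Adj.reachable (by simp [gadget, gadgetRel])
  · exact hv.reachable.trans (Adj.reachable (by simp [gadget, gadgetRel]))
  · rfl
  · exact hv.reachable
  · exact hp.reachable
  · exact hv.reachable.trans (Adj.reachable (by simp [gadget, gadgetRel]))
  · exact hp.reachable.trans (Adj.reachable (by simp [gadget, gadgetRel]))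

lemma preconnected : (gadget E0).Preconnected :=
  fun w w' => (reachable_u w).symm.trans (reachable_u w')

def potential : GV L R → ℝ
  | Sum.inl (Sum.inl _) => 1
  | Sum.inl (Sum.inr _) => 0
  | Sum.inr .u => 1
  | Sum.inr .v => 0
  | Sum.inr .p => 2
  | Sum.inr .p' => 0
  | Sum.inr .x => 1

lemma potential_le_of_adj {w w' : GV L R} (h : (gadget E0).Adj w w') :
    potential w ≤ potential w' + 1 := by
  rcases w with (a | b) | _ | _ | _ | _ | _ <;> rcases w' with (a' | b') | _ | _ | _ | _ | _ <;>
    simp [gadget, gadgetRel, potential] at h ⊢ <;> norm_num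

lemma potential_le_add_dist (w w' : GV L R) :
    potential w ≤ potential w' + (gadget E0).dist w w' :=
  (preconnected w w').le_add_dist_of_forall_adj fun _ _ => potential_le_of_adj

/-- Sends `a ↦ f a` and `p ↦ p'` and fixes `u`, `v`: the optimal coupling of `N[u]` with `N[v]`. -/
def matchingEquiv (f : L ≃ R) : GV L R ≃ GV L R :=
  Equiv.sumCongr ((Equiv.sumCongr f f.symm).trans (Equiv.sumComm R L)) (Equiv.swap .p .p')

variable [Fintype L] [Fintype R]

lemma sum_cnbr_u {M : Type*} [AddCommMonoid M] (F : GV L R → M) :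
    ∑ w ∈ cnbr (gadget E0) (Sum.inr .u), F w =
      F (Sum.inr .u) + F (Sum.inr .v) + F (Sum.inr .p) + ∑ a, F (Sum.inl (Sum.inl a)) := by
  rw [sum_cnbr, nbrF, sum_filter, Fintype.sum_sum_type, Fintype.sum_sum_type, Extra.univ_eq]
  simp [gadget, gadgetRel, add_assoc, add_comm, add_left_comm]

lemma sum_cnbr_v {M : Type*} [AddCommMonoid M] (F : GV L R → M) :
    ∑ w ∈ cnbr (gadget E0) (Sum.inr .v), F w =
      F (Sum.inr .u) + F (Sum.inr .v) + F (Sum.inr .p') + ∑ b, F (Sum.inl (Sum.inr b)) := by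
  rw [sum_cnbr, nbrF, sum_filter, Fintype.sum_sum_type, Fintype.sum_sum_type, Extra.univ_eq]
  simp [gadget, gadgetRel, add_assoc, add_comm, add_left_comm]

lemma degG_u : degG (gadget E0) (Sum.inr .u) = Fintype.card L + 2 := by
  have := sum_cnbr_u (E0 := E0) fun _ => 1
  simp only [sum_const, card_cnbr, card_univ, smul_eq_mul, mul_one] at this
  omega

lemma degG_v : degG (gadget E0) (Sum.inr .v) = Fintype.card R + 2 := by
  have := sum_cnbr_v (E0 := E0) fun _ => 1
  simp only [sum_const, card_cnbr, card_univ, smul_eq_mul, mul_one] at this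
  omega

lemma matchingEquiv_mem_cnbr_v_iff (f : L ≃ R) (w : GV L R) :
    matchingEquiv f w ∈ cnbr (gadget E0) (Sum.inr .v) ↔ w ∈ cnbr (gadget E0) (Sum.inr .u) := by
  rcases w with (a | b) | _ | _ | _ | _ | _ <;>
    simp [mem_cnbr, matchingEquiv, gadget, gadgetRel, Equiv.swap_apply_def]

lemma sum_dist_matchingEquiv {f : L ≃ R} (hf : ∀ a, E0 a (f a)) :
    ∑ w ∈ cnbr (gadget E0) (Sum.inr .u), ((gadget E0).dist w (matchingEquiv f w) : ℝ) =
      Fintype.card L + 2 := by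
  have hdist_pp' : (gadget E0).dist (Sum.inr .p) (Sum.inr .p') = 2 := by
    have hpx : (gadget E0).Adj (Sum.inr .p) (Sum.inr .x) := by simp [gadget, gadgetRel]
    have hxp' : (gadget E0).Adj (Sum.inr .x) (Sum.inr .p') := by simp [gadget, gadgetRel]
    have hle := dist_le (hpx.toWalk.append hxp'.toWalk)
    have hge := potential_le_add_dist (E0 := E0) (Sum.inr .p) (Sum.inr .p')
    simp only [Walk.length_append, Adj.length_toWalk, potential] at hle hge
    have h2 : (2 : ℝ) ≤ (gadget E0).dist (Sum.inr .p) (Sum.inr .p') := by linarith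
    exact le_antisymm hle (by exact_mod_cast h2)
  have hdist_matched :
      ∀ a, (gadget E0).dist (Sum.inl (Sum.inl a)) (Sum.inl (Sum.inr (f a))) = 1 :=
    fun a => dist_eq_one_iff_adj.mpr (by simp [gadget, gadgetRel, hf a])
  simp [sum_cnbr_u, matchingEquiv, Equiv.swap_apply_def, hdist_pp', hdist_matched, add_comm]

end Gadget

open Gadget

theorem stmt14_general {L R : Type*} [Fintype L] [Fintype R] (n : ℕ)
    (hL : Fintype.card L = n) (hR : Fintype.card R = n)
    (E0 : L → R → Prop) (hpm : ∃ f : L ≃ R, ∀ a : L, E0 a (f a)) :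
    RicG (gadget E0) (Sum.inr Extra.u) (Sum.inr Extra.v) = 1 / ((n : ℝ) + 3) ∧
    EMDG (gadget E0) (Sum.inr Extra.u) (Sum.inr Extra.v) = ((n : ℝ) + 2) / ((n : ℝ) + 3) := by
  obtain ⟨f, hf⟩ := hpm
  have hdu : (degG (gadget E0) (Sum.inr .u) : ℝ) + 1 = n + 3 := by
    rw [degG_u, hL]; push_cast; ring
  have hdv : (degG (gadget E0) (Sum.inr .v) : ℝ) + 1 = n + 3 := by
    rw [degG_v, hR]; push_cast; ring
  have hemd : EMDG (gadget E0) (Sum.inr .u) (Sum.inr .v) = (n + 2) / (n + 3) := by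
    refine IsLeast.csInf_eq ⟨⟨_, isPlanG_planOfEquiv (matchingEquiv_mem_cnbr_v_iff f), ?_⟩, ?_⟩
    · rw [planCostG_planOfEquiv (matchingEquiv_mem_cnbr_v_iff f), sum_dist_matchingEquiv hf,
        hdu, hL]
    · rintro _ ⟨z, hz, rfl⟩
      have := le_planCostG_of_potential hz fun w _ w' _ => potential_le_add_dist w w'
      rw [sum_cnbr_u, sum_cnbr_v, hdu, hdv] at this
      simp only [potential, sum_const, card_univ, hL, nsmul_eq_mul, mul_one] at this
      refine le_of_eq_of_le ?_ this
      ring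
  refine ⟨?_, hemd⟩
  rw [RicG, hemd]
  field_simp
  ring

/-- if the bipartite graph `H₀ = (L,R,E₀)` (with `|L| = |R| = n ≥ 1`) has
a perfect matching, then in the gadget graph `Ric({u,v}) = 1/(n+3)`, equivalently
`EMD(u,v) = (n+2)/(n+3)`. -/
theorem stmt14 {L R : Type*} [Fintype L] [Fintype R] (n : ℕ) (hn : 1 ≤ n)
    (hL : Fintype.card L = n) (hR : Fintype.card R = n)
    (E0 : L → R → Prop) (hpm : ∃ f : L ≃ R, ∀ a : L, E0 a (f a)) :
    RicG (gadget E0) (Sum.inr Extra.u) (Sum.inr Extra.v) = 1 / ((n : ℝ) + 3) ∧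
    EMDG (gadget E0) (Sum.inr Extra.u) (Sum.inr Extra.v) = ((n : ℝ) + 2) / ((n : ℝ) + 3) :=
  stmt14_general n hL hR E0 hpm
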